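/- Let m ≥ 3 and let c be a WOMNI weight tensor that induces flat correlation. Then the spread of the diagonal cumulative weights is bounded: max_{q ∈ {1,…,m}} α(q,q) − min_{q ∈ {1,…,m}} α(q,q) ≤ 9/2. -/

import Mathlib

/-!
Take `a` with `α(a,a) = M`, `b` with `α(b,b) = L`, and a third index `v`.
Off the diagonal `α(k,q) = 1 - c(k,k,q)`, so `S(a,v)` is at least `(M-1)² + (α(v,v)-1)²` from its
`a`- and `v`-terms alone, while in `S(b,v)` the `b`- and `v`-terms are at most `L²` and `α(v,v)²`
and every other term `(c(v,v,q) - c(b,b,q))²` is at most `c(v,v,q) + c(b,b,q)`, which sum to at most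
`(α(v,v)-1) + (L-1)`. Flatness equates the two sums, and `α(v,v) ≤ M`, `L ≥ 1` leave
`M² - 5M + 4 ≤ L² + L`, a quadratic constraint forcing `M - L < 4`.
-/

open Finset

/-- Cumulative weight `α(k,q) = ∑_ℓ c(q,k,ℓ)`. -/
noncomputable def alphaW (m : ℕ) (c : Fin m → Fin m → Fin m → ℝ) (k q : Fin m) : ℝ :=
  ∑ ℓ, c q k ℓ

/-- `β_q(s1,s2) = α(s1,q) − α(s2,q)`. -/
noncomputable def betaW (m : ℕ) (c : Fin m → Fin m → Fin m → ℝ) (q s1 s2 : Fin m) : ℝ :=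
  alphaW m c s1 q - alphaW m c s2 q

/-- WOMNI (weighted Omnibus) weight tensor. -/
def IsWOMNI (m : ℕ) (c : Fin m → Fin m → Fin m → ℝ) : Prop :=
  (∀ q i j, c q i j = c q j i) ∧
  (∀ q i j, q ≠ i → q ≠ j → c q i j = 0) ∧
  (∀ i, c i i i = 1) ∧
  (∀ q i, q ≠ i → c q i i = 0) ∧
  (∀ i j, i ≠ j → c i i j ∈ Set.Icc (0:ℝ) 1 ∧ c i i j + c j i j = 1)

/-- The tensor induces flat correlation: `S(s1,s2) = ∑_q β_q(s1,s2)²` is the same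
for all pairs `s1 ≠ s2`. -/
def InducesFlat (m : ℕ) (c : Fin m → Fin m → Fin m → ℝ) : Prop :=
  ∀ s1 s2 t1 t2 : Fin m, s1 ≠ s2 → t1 ≠ t2 →
    ∑ q, (betaW m c q s1 s2)^2 = ∑ q, (betaW m c q t1 t2)^2

namespace IsWOMNI

variable {m : ℕ} {c : Fin m → Fin m → Fin m → ℝ}

lemma alphaW_of_ne (hc : IsWOMNI m c) {k q : Fin m} (h : k ≠ q) :
    alphaW m c k q = 1 - c k k q := by
  have hsingle : alphaW m c k q = c q k q :=
    sum_eq_single q (fun ℓ _ hℓ => hc.2.1 q k ℓ h.symm hℓ.symm) (absurd (mem_univ q))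
  linarith [(hc.2.2.2.2 k q h).2]

lemma alphaW_self (hc : IsWOMNI m c) (q : Fin m) :
    alphaW m c q q = 1 + ∑ ℓ ∈ univ.erase q, c q q ℓ := by
  rw [alphaW, ← add_sum_erase _ _ (mem_univ q), hc.2.2.1 q]

lemma sum_le_alphaW_self_sub_one (hc : IsWOMNI m c) {q : Fin m} {s : Finset (Fin m)}
    (hs : s ⊆ univ.erase q) : ∑ ℓ ∈ s, c q q ℓ ≤ alphaW m c q q - 1 := by
  rw [alphaW_self hc, add_sub_cancel_left]
  exact sum_le_sum_of_subset_of_nonneg hs fun ℓ hℓ _ =>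
    (hc.2.2.2.2 q ℓ (ne_of_mem_erase hℓ).symm).1.1

lemma one_le_alphaW_self (hc : IsWOMNI m c) (q : Fin m) : 1 ≤ alphaW m c q q := by
  simpa using hc.sum_le_alphaW_self_sub_one (s := ∅) (q := q) (empty_subset _)

lemma betaW_left (hc : IsWOMNI m c) {s t : Fin m} (h : s ≠ t) :
    betaW m c s s t = alphaW m c s s - 1 + c t t s := by
  rw [betaW, hc.alphaW_of_ne h.symm]
  ring

lemma betaW_right (hc : IsWOMNI m c) {s t : Fin m} (h : s ≠ t) :
    betaW m c t s t = -(alphaW m c t t - 1 + c s s t) := by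
  rw [betaW, hc.alphaW_of_ne h]
  ring

lemma betaW_of_ne_of_ne (hc : IsWOMNI m c) {q s t : Fin m} (hs : q ≠ s) (ht : q ≠ t) :
    betaW m c q s t = c t t q - c s s q := by
  rw [betaW, hc.alphaW_of_ne hs.symm, hc.alphaW_of_ne ht.symm]
  ring

lemma sum_sq_betaW (hc : IsWOMNI m c) {s t : Fin m} (h : s ≠ t) :
    ∑ q, betaW m c q s t ^ 2 =
      (alphaW m c s s - 1 + c t t s) ^ 2 + (alphaW m c t t - 1 + c s s t) ^ 2 +
        ∑ q ∈ (univ.erase s).erase t, (c t t q - c s s q) ^ 2 := by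
  rw [← add_sum_erase _ _ (mem_univ s), ← add_sum_erase _ _ (mem_erase.2 ⟨h.symm, mem_univ t⟩),
    hc.betaW_left h, hc.betaW_right h, neg_sq, ← add_assoc]
  congr 1
  refine sum_congr rfl fun q hq => ?_
  obtain ⟨hqt, hq⟩ := mem_erase.1 hq
  rw [hc.betaW_of_ne_of_ne (ne_of_mem_erase hq) hqt]

lemma sq_alphaW_self_sub_one_add_le_sum_sq_betaW (hc : IsWOMNI m c) {s t : Fin m} (h : s ≠ t) :
    (alphaW m c s s - 1) ^ 2 + (alphaW m c t t - 1) ^ 2 ≤ ∑ q, betaW m c q s t ^ 2 := by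
  have hs := hc.one_le_alphaW_self s
  have ht := hc.one_le_alphaW_self t
  have hts := (hc.2.2.2.2 t s h.symm).1
  have hst := (hc.2.2.2.2 s t h).1
  have hrest : 0 ≤ ∑ q ∈ (univ.erase s).erase t, (c t t q - c s s q) ^ 2 :=
    sum_nonneg fun _ _ => sq_nonneg _
  rw [hc.sum_sq_betaW h]
  nlinarith [hts.1, hst.1]

lemma sum_sq_betaW_le (hc : IsWOMNI m c) {s t : Fin m} (h : s ≠ t) :
    ∑ q, betaW m c q s t ^ 2 ≤
      alphaW m c s s ^ 2 + alphaW m c t t ^ 2 + (alphaW m c s s - 1) + (alphaW m c t t - 1) := by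
  have hs := hc.one_le_alphaW_self s
  have ht := hc.one_le_alphaW_self t
  have hts := (hc.2.2.2.2 t s h.symm).1
  have hst := (hc.2.2.2.2 s t h).1
  have hrest : ∑ q ∈ (univ.erase s).erase t, (c t t q - c s s q) ^ 2 ≤
      ∑ q ∈ (univ.erase s).erase t, (c s s q + c t t q) := by
    refine sum_le_sum fun q hq => ?_
    obtain ⟨hqt, hq⟩ := mem_erase.1 hq
    have hsq := (hc.2.2.2.2 s q (ne_of_mem_erase hq).symm).1
    have htq := (hc.2.2.2.2 t q hqt.symm).1
    nlinarith [hsq.1, hsq.2, htq.1, htq.2]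
  have hsum_s := hc.sum_le_alphaW_self_sub_one (q := s) (s := (univ.erase s).erase t)
    (erase_subset _ _)
  have hsum_t := hc.sum_le_alphaW_self_sub_one (q := t) (s := (univ.erase s).erase t)
    fun q hq => mem_erase.2 ⟨ne_of_mem_erase hq, mem_univ q⟩
  rw [sum_add_distrib] at hrest
  rw [hc.sum_sq_betaW h]
  nlinarith [hts.1, hts.2, hst.1, hst.2]

end IsWOMNI

lemma sub_le_of_sq_sub_one_add_sq_sub_one_le {M L V : ℝ} (hL : 1 ≤ L) (hVM : V ≤ M)
    (h : (M - 1) ^ 2 + (V - 1) ^ 2 ≤ L ^ 2 + V ^ 2 + (L - 1) + (V - 1)) :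
    M - L ≤ 9 / 2 := by
  nlinarith [mul_nonneg (sub_nonneg.2 hL) (sub_nonneg.2 hL)]

theorem stmt_6 (m : ℕ) (hm : 3 ≤ m) (c : Fin m → Fin m → Fin m → ℝ)
    (hc : IsWOMNI m c) (hflat : InducesFlat m c)
    (M L : ℝ) (hM : IsGreatest (Set.range fun q : Fin m => alphaW m c q q) M)
    (hL : IsLeast (Set.range fun q : Fin m => alphaW m c q q) L) :
    M - L ≤ 9/2 := by
  obtain ⟨⟨a, rfl⟩, hMmax⟩ := hM
  obtain ⟨⟨b, rfl⟩, -⟩ := hL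
  obtain ⟨v, hva, hvb⟩ := ENat.exists_ne_ne_of_three_le (by simpa using hm) a b
  have hlow := hc.sq_alphaW_self_sub_one_add_le_sum_sq_betaW hva.symm
  have hup := hc.sum_sq_betaW_le hvb.symm
  rw [hflat a v b v hva.symm hvb.symm] at hlow
  exact sub_le_of_sq_sub_one_add_sq_sub_one_le (hc.one_le_alphaW_self b) (hMmax ⟨v, rfl⟩)
    (hlow.trans hup)
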